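/- In LR-Subtraction Nim with any removable set S ⊆ ℤ≥2 having minimum element s = min(S), the number of consecutive P-positions in the outcome sequence {O_S(n)} is at most s - 1; moreover if n, n+1, ..., n+k-1 is a maximal run of P-positions, then the positions immediately before and after the run are L-positions. -/
import Mathlib

open scoped Classical

inductive Outcome : Type
  | L | R | N | P
deriving DecidableEq

/-- Outcome determined from the set of outcomes of the options of a non-terminal position. -/
noncomputable def fromOptions (T : Set Outcome) : Outcome :=
  if Outcome.L ∈ T ∧ T ⊆ {Outcome.L, Outcome.N} then Outcome.L
  else if Outcome.R ∈ T ∧ T ⊆ {Outcome.R, Outcome.N} then Outcome.R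
  else if T = {Outcome.N} then Outcome.P
  else Outcome.N

/-- Outcome of Ending Partizan Subtraction Nim with removable set `S ⊆ ℤ≥2` and
terminal assignment `W`. -/
noncomputable def epOutcome (S : Set ℕ) (hS : ∀ s ∈ S, 2 ≤ s) (W : ℕ → Outcome) : ℕ → Outcome :=
  fun n => Nat.strongRecOn n (fun n ih =>
    if ∃ s ∈ S, s ≤ n then
      fromOptions {o | ∃ s, ∃ hs : s ∈ S, ∃ hsn : s ≤ n,
        o = ih (n - s) (by have := hS s hs; omega)}
    else W n)

/-- Outcome of `LR`-Subtraction Nim: at a terminal position, Left wins if the number of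
remaining tokens is even, Right wins if it is odd. -/
noncomputable def lrOutcome (S : Set ℕ) (hS : ∀ s ∈ S, 2 ≤ s) : ℕ → Outcome :=
  epOutcome S hS (fun n => if Even n then Outcome.L else Outcome.R)

open Outcome

lemma lrOutcome_eq (S : Set ℕ) (hS : ∀ s ∈ S, 2 ≤ s) (n : ℕ) :
    lrOutcome S hS n =
      if ∃ s ∈ S, s ≤ n then
        fromOptions {o | ∃ s, ∃ _ : s ∈ S, ∃ _ : s ≤ n, o = lrOutcome S hS (n - s)}
      else if Even n then Outcome.L else Outcome.R := by
  show epOutcome S hS _ n = _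
  unfold epOutcome
  rw [Nat.strongRecOn_eq]
  rfl

-- facts about fromOptions
lemma fo_L {T : Set Outcome} (h1 : L ∈ T) (h2 : T ⊆ {L, N}) : fromOptions T = L := by
  unfold fromOptions; rw [if_pos ⟨h1, h2⟩]

lemma fo_LP {T : Set Outcome} (h0 : T.Nonempty) (h2 : T ⊆ {L, N}) :
    fromOptions T = L ∨ fromOptions T = P := by
  by_cases h1 : L ∈ T
  · exact Or.inl (fo_L h1 h2)
  · right
    have hT : T = {N} := by
      apply Set.eq_singleton_iff_nonempty_unique_mem.2 ⟨h0, ?_⟩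
      intro x hx
      rcases h2 hx with h | h
      · exact absurd (h ▸ hx) h1
      · exact h
    rw [hT]
    unfold fromOptions
    rw [if_neg, if_neg, if_pos rfl]
    · rintro ⟨hR, -⟩; simp at hR
    · rintro ⟨hL, -⟩; simp at hL

lemma fo_LN {T : Set Outcome} (h1 : L ∈ T) : fromOptions T = L ∨ fromOptions T = N := by
  unfold fromOptions
  split_ifs with hA hB hC
  · exact Or.inl rfl
  · rcases hB.2 h1 with h | h <;> simp at h
  · rw [hC] at h1; simp at h1
  · exact Or.inr rfl

lemma fo_P_mem {T : Set Outcome} (h1 : P ∈ T) : fromOptions T = N := by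
  unfold fromOptions
  split_ifs with hA hB hC
  · rcases hA.2 h1 with h | h <;> simp at h
  · rcases hB.2 h1 with h | h <;> simp at h
  · rw [hC] at h1; simp at h1
  · rfl

lemma fo_eq_P {T : Set Outcome} (h : fromOptions T = P) : T = {N} := by
  unfold fromOptions at h
  split_ifs at h with hA hB hC
  exact hC

lemma fo_eq_R {T : Set Outcome} (h : fromOptions T = R) : R ∈ T ∧ T ⊆ {R, N} := by
  unfold fromOptions at h
  split_ifs at h with hA hB hC
  exact hB

lemma fo_eq_N {T : Set Outcome} (h0 : T.Nonempty) (h : fromOptions T = N) :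
    P ∈ T ∨ (R ∈ T) := by
  unfold fromOptions at h
  split_ifs at h with hA hB hC
  by_contra hcon
  push_neg at hcon
  have hsub : T ⊆ {L, N} := by
    intro x hx
    cases x
    · simp
    · exact absurd hx hcon.2
    · simp
    · exact absurd hx hcon.1
  by_cases hL : L ∈ T
  · exact hA ⟨hL, hsub⟩
  · apply hC
    apply Set.eq_singleton_iff_nonempty_unique_mem.2 ⟨h0, ?_⟩
    intro x hx
    rcases hsub hx with hh | hh
    · exact absurd (hh ▸ hx) hL
    · exact hh

lemma nonterm_iff (S : Set ℕ) (hS : ∀ s ∈ S, 2 ≤ s) (s : ℕ) (hmin : IsLeast S s) (n : ℕ) : (∃ t ∈ S, t ≤ n) ↔ s ≤ n := by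
  constructor
  · rintro ⟨t, ht, htn⟩; exact le_trans (hmin.2 ht) htn
  · intro h; exact ⟨s, hmin.1, h⟩

lemma O_terminal (S : Set ℕ) (hS : ∀ s ∈ S, 2 ≤ s) (s : ℕ) (hmin : IsLeast S s) {n : ℕ} (h : n < s) :
    lrOutcome S hS n = (if Even n then Outcome.L else Outcome.R) := by
  rw [lrOutcome_eq, if_neg]
  rw [nonterm_iff S hS s hmin]; omega

lemma O_nonterminal (S : Set ℕ) (hS : ∀ s ∈ S, 2 ≤ s) (s : ℕ) (hmin : IsLeast S s) {n : ℕ} (h : s ≤ n) :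
    lrOutcome S hS n =
      fromOptions {o | ∃ t, ∃ _ : t ∈ S, ∃ _ : t ≤ n, o = lrOutcome S hS (n - t)} := by
  rw [lrOutcome_eq, if_pos ((nonterm_iff S hS s hmin n).2 h)]

lemma O_zero (S : Set ℕ) (hS : ∀ s ∈ S, 2 ≤ s) (s : ℕ) (hmin : IsLeast S s) : lrOutcome S hS 0 = L := by
  have hs2 : 2 ≤ s := hS s hmin.1
  rw [O_terminal S hS s hmin (by omega)]
  simp

/-- From a `P` position every option is an `N` position. -/
lemma P_opts (S : Set ℕ) (hS : ∀ s ∈ S, 2 ≤ s) (s : ℕ) (hmin : IsLeast S s) {n : ℕ} (hP : lrOutcome S hS n = P) :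
    s ≤ n ∧ ∀ t ∈ S, t ≤ n → lrOutcome S hS (n - t) = N := by
  have hs2 : 2 ≤ s := hS s hmin.1
  have hnt : s ≤ n := by
    by_contra hc
    rw [O_terminal S hS s hmin (show n < s by omega)] at hP
    split_ifs at hP
  refine ⟨hnt, ?_⟩
  rw [O_nonterminal S hS s hmin hnt] at hP
  have hT := fo_eq_P hP
  intro t ht htn
  have : lrOutcome S hS (n - t) ∈ ({N} : Set Outcome) := by
    rw [← hT]; exact ⟨t, ht, htn, rfl⟩
  simpa using this

/-- The pair invariant: the pair of outcomes at consecutive positions avoids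
RR, RN, RP, NR, NP, PR, PN. -/
lemma pair_inv (S : Set ℕ) (hS : ∀ s ∈ S, 2 ≤ s) (s : ℕ) (hmin : IsLeast S s) : ∀ m : ℕ,
    (lrOutcome S hS m = R → lrOutcome S hS (m + 1) = L) ∧
    (lrOutcome S hS m = P → lrOutcome S hS (m + 1) = L ∨ lrOutcome S hS (m + 1) = P) ∧
    (lrOutcome S hS m = N → lrOutcome S hS (m + 1) = L ∨ lrOutcome S hS (m + 1) = N) := by
  have hs2 : 2 ≤ s := hS s hmin.1
  intro m
  induction m using Nat.strong_induction_on with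
  | _ m IH =>
  by_cases hm1 : m + 1 < s
  · -- both terminal
    rw [O_terminal S hS s hmin (show m < s by omega), O_terminal S hS s hmin hm1]
    rcases Nat.even_or_odd m with he | ho
    · have : ¬ Even (m+1) := by simp [Nat.even_add_one, he]
      rw [if_pos he, if_neg this]
      refine ⟨by simp, by simp, by simp⟩
    · have hno : ¬ Even m := Nat.not_even_iff_odd.2 ho
      have he1 : Even (m+1) := by simpa [Nat.even_add_one] using hno
      rw [if_neg hno, if_pos he1]
      refine ⟨fun _ => rfl, by simp, by simp⟩
  · by_cases hm : m < s
    · -- m terminal, m+1 nonterminal with unique option 0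
      have hm1' : s ≤ m + 1 := by omega
      have hmeq : m + 1 = s := by omega
      have hOm1 : lrOutcome S hS (m+1) = L := by
        rw [O_nonterminal S hS s hmin hm1']
        apply fo_L
        · refine ⟨s, hmin.1, hm1', ?_⟩
          have : m + 1 - s = 0 := by omega
          rw [this, O_zero S hS s hmin]
        · rintro o ⟨t, ht, htn, rfl⟩
          have hts : t = m + 1 := by have := hmin.2 ht; omega
          have : m + 1 - t = 0 := by omega
          rw [this, O_zero S hS s hmin]; simp
      rw [O_terminal S hS s hmin hm]
      split_ifs <;> refine ⟨fun _ => hOm1, by simp, by simp⟩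
    · -- both nonterminal
      have hmS : s ≤ m := by omega
        -- a helper: for t ∈ S with t ≤ m+1, either t ≤ m and m+1-t = (m-t)+1, or t = m+1
      have hsplit : ∀ t, t ∈ S → t ≤ m + 1 → (t ≤ m ∧ m + 1 - t = (m - t) + 1) ∨ m + 1 - t = 0 := by
        intro t ht htn
        by_cases h : t ≤ m
        · exact Or.inl ⟨h, by omega⟩
        · exact Or.inr (by omega)
      have hIH : ∀ t, t ∈ S → t ≤ m →
          (lrOutcome S hS (m - t) = R → lrOutcome S hS (m - t + 1) = L) ∧
          (lrOutcome S hS (m - t) = P → lrOutcome S hS (m - t + 1) = L ∨ lrOutcome S hS (m - t + 1) = P) ∧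
          (lrOutcome S hS (m - t) = N → lrOutcome S hS (m - t + 1) = L ∨ lrOutcome S hS (m - t + 1) = N) := by
        intro t ht htm
        exact IH (m - t) (by have := hS t ht; omega)
      have hOm : lrOutcome S hS m = fromOptions {o | ∃ t, ∃ _ : t ∈ S, ∃ _ : t ≤ m, o = lrOutcome S hS (m - t)} :=
        O_nonterminal S hS s hmin hmS
      have hOm1 : lrOutcome S hS (m+1) = fromOptions {o | ∃ t, ∃ _ : t ∈ S, ∃ _ : t ≤ m + 1, o = lrOutcome S hS (m + 1 - t)} :=
        O_nonterminal S hS s hmin (by omega)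
      have hne1 : ({o | ∃ t, ∃ _ : t ∈ S, ∃ _ : t ≤ m + 1, o = lrOutcome S hS (m + 1 - t)} : Set Outcome).Nonempty :=
        ⟨lrOutcome S hS (m + 1 - s), s, hmin.1, by omega, rfl⟩
      refine ⟨?_, ?_, ?_⟩
      · -- O m = R
        intro hR
        rw [hOm] at hR
        obtain ⟨hRmem, hRsub⟩ := fo_eq_R hR
        rw [hOm1]
        apply fo_L
        · obtain ⟨t, ht, htm, hteq⟩ := hRmem
          refine ⟨t, ht, by omega, ?_⟩
          have := (hIH t ht htm).1 hteq.symm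
          rw [show m + 1 - t = m - t + 1 by omega, ← this]
        · rintro o ⟨t, ht, htn, rfl⟩
          rcases hsplit t ht htn with ⟨htm, heq⟩ | heq
          · have hmem : lrOutcome S hS (m - t) ∈ ({o | ∃ t, ∃ _ : t ∈ S, ∃ _ : t ≤ m, o = lrOutcome S hS (m - t)} : Set Outcome) :=
              ⟨t, ht, htm, rfl⟩
            rw [heq]
            rcases hRsub hmem with hh | hh
            · left; exact (hIH t ht htm).1 hh
            · rcases (hIH t ht htm).2.2 hh with h | h
              · exact Or.inl h
              · exact Or.inr (by simpa using h)
          · rw [heq, O_zero S hS s hmin]; simp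
      · -- O m = P
        intro hP
        rw [hOm] at hP
        have hT := fo_eq_P hP
        rw [hOm1]
        apply fo_LP hne1
        rintro o ⟨t, ht, htn, rfl⟩
        rcases hsplit t ht htn with ⟨htm, heq⟩ | heq
        · have hmem : lrOutcome S hS (m - t) ∈ ({o | ∃ t, ∃ _ : t ∈ S, ∃ _ : t ≤ m, o = lrOutcome S hS (m - t)} : Set Outcome) :=
            ⟨t, ht, htm, rfl⟩
          rw [hT] at hmem
          have hN : lrOutcome S hS (m - t) = N := by simpa using hmem
          rw [heq]
          rcases (hIH t ht htm).2.2 hN with h | h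
          · exact Or.inl h
          · exact Or.inr (by simpa using h)
        · rw [heq, O_zero S hS s hmin]; simp
      · -- O m = N
        intro hN
        rw [hOm] at hN
        have hne0 : ({o | ∃ t, ∃ _ : t ∈ S, ∃ _ : t ≤ m, o = lrOutcome S hS (m - t)} : Set Outcome).Nonempty :=
          ⟨lrOutcome S hS (m - s), s, hmin.1, hmS, rfl⟩
        rcases fo_eq_N hne0 hN with hPm | hRm
        · obtain ⟨t, ht, htm, hteq⟩ := hPm
          rcases (hIH t ht htm).2.1 hteq.symm with hL | hP
          · -- L ∈ T(m+1)
            have : L ∈ ({o | ∃ t, ∃ _ : t ∈ S, ∃ _ : t ≤ m + 1, o = lrOutcome S hS (m + 1 - t)} : Set Outcome) :=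
              ⟨t, ht, by omega, by rw [show m + 1 - t = m - t + 1 by omega, hL]⟩
            rw [hOm1]; exact fo_LN this
          · have : P ∈ ({o | ∃ t, ∃ _ : t ∈ S, ∃ _ : t ≤ m + 1, o = lrOutcome S hS (m + 1 - t)} : Set Outcome) :=
              ⟨t, ht, by omega, by rw [show m + 1 - t = m - t + 1 by omega, hP]⟩
            rw [hOm1]; exact Or.inr (fo_P_mem this)
        · obtain ⟨t, ht, htm, hteq⟩ := hRm
          have hL := (hIH t ht htm).1 hteq.symm
          have : L ∈ ({o | ∃ t, ∃ _ : t ∈ S, ∃ _ : t ≤ m + 1, o = lrOutcome S hS (m + 1 - t)} : Set Outcome) :=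
            ⟨t, ht, by omega, by rw [show m + 1 - t = m - t + 1 by omega, hL]⟩
          rw [hOm1]; exact fo_LN this

theorem stmt5 (S : Set ℕ) (hS : ∀ s ∈ S, 2 ≤ s) (s : ℕ) (hmin : IsLeast S s) :
    -- any run of consecutive `P`-positions has length at most `min S - 1`
    (∀ n k : ℕ, (∀ i < k, lrOutcome S hS (n + i) = Outcome.P) → k ≤ s - 1) ∧
    -- both sides of a maximal run of `P`-positions are `L`-positions
    (∀ n k : ℕ, 1 ≤ k →
      (∀ i < k, lrOutcome S hS (n + i) = Outcome.P) →
      lrOutcome S hS (n - 1) ≠ Outcome.P → lrOutcome S hS (n + k) ≠ Outcome.P →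
      lrOutcome S hS (n - 1) = Outcome.L ∧ lrOutcome S hS (n + k) = Outcome.L) := by
  have hs2 : 2 ≤ s := hS s hmin.1
  have hOzero : lrOutcome S hS 0 = L := O_zero S hS s hmin
  have hpair := pair_inv S hS s hmin
  constructor
  · intro n k h
    by_contra hc
    have hks : s ≤ k := by omega
    have hn0 : lrOutcome S hS n = P := h 0 (by omega)
    have hn1 : 1 ≤ n := by
      rcases Nat.eq_zero_or_pos n with rfl | h1
      · rw [hOzero] at hn0; simp at hn0
      · exact h1
    have hns : lrOutcome S hS (n + (s - 1)) = P := h (s - 1) (by omega)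
    obtain ⟨hnt, hopts⟩ := P_opts S hS s hmin hns
    have hNn : lrOutcome S hS (n + (s - 1) - s) = N := hopts s hmin.1 (by omega)
    have hsub : n + (s - 1) - s = n - 1 := by omega
    rw [hsub] at hNn
    rcases (hpair (n - 1)).2.2 hNn with hh | hh <;>
      rw [show n - 1 + 1 = n by omega] at hh <;> rw [hn0] at hh <;> simp at hh
  · intro n k hk h hnP hkP
    have hn0 : lrOutcome S hS n = P := h 0 (by omega)
    have hn1 : 1 ≤ n := by
      rcases Nat.eq_zero_or_pos n with rfl | h1
      · rw [hOzero] at hn0; simp at hn0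
      · exact h1
    constructor
    · rcases hx : lrOutcome S hS (n - 1) with _ | _ | _ | _
      · rfl
      · have := (hpair (n - 1)).1 hx
        rw [show n - 1 + 1 = n by omega, hn0] at this; simp at this
      · rcases (hpair (n - 1)).2.2 hx with hh | hh <;>
          rw [show n - 1 + 1 = n by omega, hn0] at hh <;> simp at hh
      · exact absurd hx hnP
    · have hlast : lrOutcome S hS (n + (k - 1)) = P := h (k - 1) (by omega)
      rcases (hpair (n + (k - 1))).2.1 hlast with hh | hh <;>
        rw [show n + (k - 1) + 1 = n + k by omega] at hh
      · exact hh
      · exact absurd hh hkP
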